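/- Under the truncated negative binomial model with binomial sampling at rate p, the conditional probability that a species has unsampled abundance k given sampled abundance l ≥ 1 is P(n^{1-p}=k | n^p=l) = [C(k+l,l)·p^l·(1-p)^k · C(k+l+r-1,k+l)·ξ^{k+l}·(1-ξ)^r] / [C(l+r-1,l)·ξ_p^l·(1-ξ_p)^r], and these probabilities sum to 1 over k ≥ 0. -/

import Mathlib

/-!
Given `n^p = l` the unsampled abundance is `n - l`, so the conditional probability is the joint
weight `C(k+l,l) p^l (1-p)^k P(n = k+l)` over the marginal `P(n^p = l)`, the sum of these weights
over `k`. Since `l ≥ 1`, the truncation at `0` contributes the same factor `(1 - (1-ξ)^r)⁻¹` to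
every term and cancels. The identity `C(k+l,l) C(k+l+r-1,k+l) = C(k+l+r-1,k) C(l+r-1,l)` turns
the marginal into the negative binomial series `∑ₖ C(k+s-1,k) x^k = (1-x)^(-s)` with `s = r + l`,
`x = (1-p)ξ`, and `1 - (1-p)ξ = (1-ξ)/(1-ξ_p)` gives the stated denominator. Read as
`∑ₖ numerator = denominator`, the same computation says that the probabilities sum to `1`.
-/

open MeasureTheory

/-- Generalized negative binomial coefficient C(n+r-1, n) = Γ(n+r)/(Γ(n+1)Γ(r)). -/
noncomputable def nbCoef (r : ℝ) (n : ℕ) : ℝ :=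
  Real.Gamma (n + r) / (Real.Gamma (n + 1) * Real.Gamma r)

open Set
open scoped ENNReal

theorem Real.Gamma_natCast_add_eq_ascPochhammer_mul {a : ℝ} (ha : 0 < a) (n : ℕ) :
    Real.Gamma (n + a) = (ascPochhammer ℝ n).eval a * Real.Gamma a := by
  induction n with
  | zero => simp
  | succ n ih =>
    rw [ascPochhammer_succ_right, Polynomial.eval_mul, Nat.cast_succ, add_right_comm,
      Real.Gamma_add_one (by positivity), ih]
    simp only [Polynomial.eval_add, Polynomial.eval_X, Polynomial.eval_natCast]
    ring

theorem nbCoef_eq_ringChoose {a : ℝ} (ha : 0 < a) (n : ℕ) :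
    nbCoef a n = Ring.choose (a + n - 1) n := by
  have hfac := Ring.factorial_nsmul_multichoose_eq_ascPochhammer a n
  rw [Polynomial.ascPochhammer_smeval_eq_eval, nsmul_eq_mul] at hfac
  rw [← Ring.multichoose_eq, nbCoef, Real.Gamma_natCast_add_eq_ascPochhammer_mul ha, Real.Gamma_nat_eq_factorial,
    ← hfac]
  have := (Real.Gamma_pos_of_pos ha).ne'
  field_simp

theorem nbCoef_pos {r : ℝ} (hr : 0 < r) (n : ℕ) : 0 < nbCoef r n :=
  div_pos (Real.Gamma_pos_of_pos (by positivity))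
    (mul_pos (Real.Gamma_pos_of_pos (by positivity)) (Real.Gamma_pos_of_pos hr))

theorem hasSum_nbCoef_mul_pow {a x : ℝ} (ha : 0 < a) (hx : |x| < 1) :
    HasSum (fun n : ℕ => nbCoef a n * x ^ n) ((1 - x) ^ (-a)) := by
  have := (Real.one_div_one_sub_rpow_hasFPowerSeriesOnBall_zero a).hasSum (y := x) (by
    simpa [enorm_eq_nnnorm, ← NNReal.coe_lt_coe] using hx)
  rw [Real.rpow_neg (by linarith [abs_lt.mp hx])]
  simpa [FormalMultilinearSeries.ofScalars_apply_eq, nbCoef_eq_ringChoose ha, add_sub_assoc,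
    mul_comm] using this

theorem choose_mul_nbCoef_add {r : ℝ} (hr : 0 < r) (k l : ℕ) :
    ((k + l).choose l : ℝ) * nbCoef r (k + l) = nbCoef (r + l) k * nbCoef r l := by
  have h := Ring.choose_add_smul_choose (r + l - 1) l k
  rw [nsmul_eq_mul, add_comm l k, Nat.choose_symm_add] at h
  rw [nbCoef_eq_ringChoose hr, nbCoef_eq_ringChoose (by positivity), nbCoef_eq_ringChoose hr]
  convert h using 3 <;> push_cast <;> ring

noncomputable def negBinomialPmf (r ξ : ℝ) (n : ℕ) : ℝ :=
  nbCoef r n * ξ ^ n * (1 - ξ) ^ r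

-- `1 - (1 - ξ) ^ r` is the mass of `{n ≥ 1}` under `negBinomialPmf r ξ`.
noncomputable def truncNegBinomialPmf (r ξ : ℝ) (n : ℕ) : ℝ :=
  if 1 ≤ n then (1 - (1 - ξ) ^ r)⁻¹ * nbCoef r n * ξ ^ n * (1 - ξ) ^ r else 0

section NegBinomial

variable {r ξ : ℝ}

theorem negBinomialPmf_pos (hr : 0 < r) (hξ0 : 0 < ξ) (hξ1 : ξ < 1) (n : ℕ) :
    0 < negBinomialPmf r ξ n := by
  have := nbCoef_pos hr n
  have : 0 < 1 - ξ := by linarith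
  unfold negBinomialPmf
  positivity

theorem hasSum_negBinomialPmf (hr : 0 < r) (hξ0 : 0 ≤ ξ) (hξ1 : ξ < 1) :
    HasSum (negBinomialPmf r ξ) 1 := by
  have hseries := (hasSum_nbCoef_mul_pow hr (abs_lt.2 ⟨by linarith, hξ1⟩)).mul_left ((1 - ξ) ^ r)
  rw [← Real.rpow_add (by linarith), add_neg_cancel, Real.rpow_zero] at hseries
  exact hseries.congr_fun fun n => by simp only [negBinomialPmf]; ring

theorem hasSum_truncNegBinomialPmf (hr : 0 < r) (hξ0 : 0 < ξ) (hξ1 : ξ < 1) :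
    HasSum (truncNegBinomialPmf r ξ) 1 := by
  have hmass : 0 < 1 - (1 - ξ) ^ r := sub_pos.2 (Real.rpow_lt_one (by linarith) (by linarith) hr)
  have htail := ((hasSum_nat_add_iff' 1).2 (hasSum_negBinomialPmf hr hξ0.le hξ1)).mul_left
    (1 - (1 - ξ) ^ r)⁻¹
  rw [← hasSum_nat_add_iff' 1]
  have hval : (1 - (1 - ξ) ^ r)⁻¹ * (1 - ∑ i ∈ Finset.range 1, negBinomialPmf r ξ i) =
      1 - ∑ i ∈ Finset.range 1, truncNegBinomialPmf r ξ i := by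
    simp [truncNegBinomialPmf, negBinomialPmf, nbCoef, (Real.Gamma_pos_of_pos hr).ne', hmass.ne']
  rw [← hval]
  exact htail.congr_fun fun n => by simp [truncNegBinomialPmf, negBinomialPmf, mul_assoc]

theorem truncNegBinomialPmf_nonneg (hr : 0 < r) (hξ0 : 0 < ξ) (hξ1 : ξ < 1) (n : ℕ) :
    0 ≤ truncNegBinomialPmf r ξ n := by
  have hmass : 0 < 1 - (1 - ξ) ^ r := sub_pos.2 (Real.rpow_lt_one (by linarith) (by linarith) hr)
  have := nbCoef_pos hr n
  have : 0 ≤ 1 - ξ := by linarith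
  unfold truncNegBinomialPmf
  split_ifs <;> positivity

/-- Binomial thinning at rate `p` maps the negative binomial law with parameter `ξ` to the one
with parameter `ξ_p = p ξ / (1 - ξ (1 - p))`. -/
theorem hasSum_choose_mul_negBinomialPmf_add (hr : 0 < r) (hξ0 : 0 ≤ ξ) (hξ1 : ξ < 1) {p : ℝ}
    (hp0 : 0 ≤ p) (hp1 : p ≤ 1) (l : ℕ) :
    HasSum (fun k : ℕ => ((k + l).choose l : ℝ) * p ^ l * (1 - p) ^ k * negBinomialPmf r ξ (k + l))
      (negBinomialPmf r (p * ξ / (1 - ξ * (1 - p))) l) := by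
  have hq : 0 < 1 - ξ * (1 - p) := by nlinarith
  have hξ' : 0 < 1 - ξ := by linarith
  have hseries := (hasSum_nbCoef_mul_pow (a := r + l) (x := (1 - p) * ξ) (by positivity)
    (abs_lt.2 ⟨by nlinarith, by nlinarith⟩)).mul_left (nbCoef r l * (p * ξ) ^ l * (1 - ξ) ^ r)
  have hval : nbCoef r l * (p * ξ) ^ l * (1 - ξ) ^ r * (1 - (1 - p) * ξ) ^ (-(r + l)) =
      negBinomialPmf r (p * ξ / (1 - ξ * (1 - p))) l := by
    have hξp : 1 - p * ξ / (1 - ξ * (1 - p)) = (1 - ξ) / (1 - ξ * (1 - p)) := by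
      field_simp
      ring
    rw [negBinomialPmf, hξp, Real.div_rpow hξ'.le hq.le,
      show 1 - (1 - p) * ξ = 1 - ξ * (1 - p) by ring, Real.rpow_neg hq.le, Real.rpow_add hq,
      Real.rpow_natCast, div_pow]
    field_simp
  rw [← hval]
  refine hseries.congr_fun fun k => ?_
  rw [negBinomialPmf, pow_add, mul_pow, mul_pow]
  linear_combination (p ^ l * (1 - p) ^ k * ξ ^ k * ξ ^ l * (1 - ξ) ^ r) *
    choose_mul_nbCoef_add hr k l

end NegBinomial

-- `X` need not be measurable, so `μ` is only countably subadditive on the fibres; the total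
-- mass `1` of the fibres supplies the reverse inequality.
theorem measure_preimage_eq_tsum_of_tsum_eq_one {Ω α : Type*} [MeasurableSpace Ω] [Countable α]
    {μ : Measure Ω} [IsProbabilityMeasure μ] {X : Ω → α} (h : ∑' a, μ (X ⁻¹' {a}) = 1)
    (s : Set α) : μ (X ⁻¹' s) = ∑' a : s, μ (X ⁻¹' {(a : α)}) := by
  have hle : ∀ t : Set α, μ (X ⁻¹' t) ≤ ∑' a : t, μ (X ⁻¹' {(a : α)}) := fun t => by
    conv_lhs => rw [← iUnion_of_singleton_coe t, preimage_iUnion]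
    exact measure_iUnion_le _
  have hsplit : ∑' a : s, μ (X ⁻¹' {(a : α)}) + ∑' a : ↥sᶜ, μ (X ⁻¹' {(a : α)}) = 1 :=
    (ENNReal.summable.tsum_add_tsum_compl (f := fun a => μ (X ⁻¹' {a}))
      ENNReal.summable).trans h
  have hcover : 1 ≤ μ (X ⁻¹' s) + μ (X ⁻¹' sᶜ) := by
    rw [← measure_univ (μ := μ), ← preimage_univ, ← union_compl_self s, preimage_union]
    exact measure_union_le _ _
  have hfin : ∑' a : ↥sᶜ, μ (X ⁻¹' {(a : α)}) ≠ ∞ :=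
    ne_top_of_le_ne_top ENNReal.one_ne_top (hsplit ▸ le_add_self)
  refine le_antisymm (hle s) ((ENNReal.add_le_add_iff_right hfin).1 ?_)
  rw [hsplit]
  exact hcover.trans (add_le_add_right (hle sᶜ) _)

section BinomialThinning

variable {Ω : Type*} [MeasurableSpace Ω] {μ : Measure Ω} {N Np : Ω → ℕ}

theorem tsum_measure_eq_one_of_binomial_thinning {w : ℕ → ℝ} {p : ℝ} (hp0 : 0 ≤ p) (hp1 : p ≤ 1)
    (hw0 : ∀ n, 0 ≤ w n) (hw : HasSum w 1) (hle : ∀ ω, Np ω ≤ N ω)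
    (hjoint : ∀ n k : ℕ, k ≤ n → μ {ω | N ω = n ∧ Np ω = k} =
      ENNReal.ofReal ((n.choose k : ℝ) * p ^ k * (1 - p) ^ (n - k) * w n)) :
    ∑' q : ℕ × ℕ, μ ((fun ω => (N ω, Np ω)) ⁻¹' {q}) = 1 := by
  have hfiber : ∀ n k, (fun ω => (N ω, Np ω)) ⁻¹' {(n, k)} = {ω | N ω = n ∧ Np ω = k} :=
    fun n k => by ext; simp
  have hbinom : ∀ n : ℕ, ∑ k ∈ Finset.range (n + 1),
      (n.choose k : ℝ) * p ^ k * (1 - p) ^ (n - k) = 1 := fun n => by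
    have h := add_pow p (1 - p) n
    rw [add_sub_cancel, one_pow] at h
    exact (Finset.sum_congr rfl fun _ _ => by ring).trans h.symm
  have hrow : ∀ n, ∑' k, μ {ω | N ω = n ∧ Np ω = k} = ENNReal.ofReal (w n) := fun n => by
    rw [tsum_eq_sum (s := Finset.range (n + 1)) fun k hk => ?_]
    · rw [Finset.sum_congr rfl fun k hk => hjoint n k (Finset.mem_range_succ_iff.1 hk),
        ← ENNReal.ofReal_sum_of_nonneg fun k _ => by have := hw0 n; positivity,
        ← Finset.sum_mul, hbinom, one_mul]
    · convert measure_empty (μ := μ)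
      ext ω
      simp only [mem_ofPred_eq, mem_empty_iff_false, iff_false, not_and]
      have := hle ω
      have := Finset.mem_range_succ_iff.not.1 hk
      omega
  simp only [ENNReal.tsum_prod', hfiber, hrow]
  rw [← ENNReal.ofReal_tsum_of_nonneg hw0 hw.summable, hw.tsum_eq, ENNReal.ofReal_one]

theorem measure_snd_eq_tsum [IsProbabilityMeasure μ] (hle : ∀ ω, Np ω ≤ N ω)
    (htotal : ∑' q : ℕ × ℕ, μ ((fun ω => (N ω, Np ω)) ⁻¹' {q}) = 1) (l : ℕ) :
    μ {ω | Np ω = l} = ∑' k, μ {ω | N ω = k + l ∧ Np ω = l} := by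
  have hset : {ω | Np ω = l} = (fun ω => (N ω, Np ω)) ⁻¹' range fun k => (k + l, l) := by
    ext ω
    have := hle ω
    simp only [mem_ofPred_eq, mem_preimage, mem_range, Prod.mk.injEq]
    exact ⟨fun h => ⟨N ω - l, by omega, h.symm⟩, fun ⟨_, _, h⟩ => h.symm⟩
  rw [hset, measure_preimage_eq_tsum_of_tsum_eq_one htotal,
    tsum_range (fun q => μ ((fun ω => (N ω, Np ω)) ⁻¹' {q})) fun _ _ h => by simpa using h]
  exact tsum_congr fun k => congrArg μ (by ext; simp)

end BinomialThinning

theorem setOf_sub_eq_and_eq {Ω : Type*} {N Np : Ω → ℕ} (hle : ∀ ω, Np ω ≤ N ω) (k l : ℕ) :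
    {ω | N ω - Np ω = k ∧ Np ω = l} = {ω | N ω = k + l ∧ Np ω = l} := by
  ext ω
  have := hle ω
  simp only [mem_ofPred_eq]
  omega

/-- Conditional probability of unsampled abundance k given sampled abundance l ≥ 1,
under the truncated negative binomial model with binomial thinning at rate p:
P(n^{1-p}=k | n^p=l) = [C(k+l,l) p^l (1-p)^k C(k+l+r-1,k+l) ξ^{k+l} (1-ξ)^r] /
[C(l+r-1,l) ξ_p^l (1-ξ_p)^r], and these probabilities sum to 1 over k ≥ 0. -/
theorem stmt10 {Ω : Type*} [MeasurableSpace Ω] (μ : Measure Ω)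
    [IsProbabilityMeasure μ] (r ξ p : ℝ) (hr : 0 < r)
    (hξ : ξ ∈ Set.Ioo (0:ℝ) 1) (hp : p ∈ Set.Ioo (0:ℝ) 1)
    (N Np : Ω → ℕ) (hle : ∀ ω, Np ω ≤ N ω)
    (hjoint : ∀ n k : ℕ, k ≤ n →
      μ {ω | N ω = n ∧ Np ω = k} =
        ENNReal.ofReal ((n.choose k : ℝ) * p ^ k * (1 - p) ^ (n - k) *
          (if 1 ≤ n then (1 - (1 - ξ) ^ r)⁻¹ * nbCoef r n * ξ ^ n * (1 - ξ) ^ r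
           else 0)))
    (l : ℕ) (hl : 1 ≤ l) :
    (∀ k : ℕ,
      (μ {ω | N ω - Np ω = k ∧ Np ω = l}).toReal / (μ {ω | Np ω = l}).toReal =
        (((k + l).choose l : ℝ) * p ^ l * (1 - p) ^ k *
          nbCoef r (k + l) * ξ ^ (k + l) * (1 - ξ) ^ r) /
        (nbCoef r l * (p * ξ / (1 - ξ * (1 - p))) ^ l *
          (1 - p * ξ / (1 - ξ * (1 - p))) ^ r)) ∧
    ∑' k : ℕ,
      (((k + l).choose l : ℝ) * p ^ l * (1 - p) ^ k *
        nbCoef r (k + l) * ξ ^ (k + l) * (1 - ξ) ^ r) /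
      (nbCoef r l * (p * ξ / (1 - ξ * (1 - p))) ^ l *
        (1 - p * ξ / (1 - ξ * (1 - p))) ^ r) = 1 := by
  obtain ⟨hξ0, hξ1⟩ := hξ
  obtain ⟨hp0, hp1⟩ := hp
  set c := (1 - (1 - ξ) ^ r)⁻¹
  set f : ℕ → ℝ := fun k => ((k + l).choose l : ℝ) * p ^ l * (1 - p) ^ k *
    nbCoef r (k + l) * ξ ^ (k + l) * (1 - ξ) ^ r
  set D := negBinomialPmf r (p * ξ / (1 - ξ * (1 - p))) l
  have hc : 0 < c := inv_pos.2 (sub_pos.2 (Real.rpow_lt_one (by linarith) (by linarith) hr))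
  have hf : ∀ k, 0 ≤ f k := fun k => by
    have := nbCoef_pos hr (k + l)
    have : 0 ≤ 1 - ξ := by linarith
    positivity
  have hfD : HasSum f D :=
    (hasSum_choose_mul_negBinomialPmf_add hr hξ0.le hξ1 hp0.le hp1.le l).congr_fun fun k => by
      simp only [f, negBinomialPmf]
      ring
  have hD : 0 < D := by
    have hq : 0 < 1 - ξ * (1 - p) := by nlinarith
    exact negBinomialPmf_pos hr (by positivity) ((div_lt_one hq).2 (by nlinarith)) l
  have hfiber : ∀ k, μ {ω | N ω = k + l ∧ Np ω = l} = ENNReal.ofReal (c * f k) := fun k => by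
    rw [hjoint _ _ (Nat.le_add_left l k), if_pos (by omega), Nat.add_sub_cancel]
    congr 1
    ring
  have hmarg : μ {ω | Np ω = l} = ENNReal.ofReal (c * D) := by
    rw [measure_snd_eq_tsum hle (tsum_measure_eq_one_of_binomial_thinning hp0.le hp1.le
        (truncNegBinomialPmf_nonneg hr hξ0 hξ1) (hasSum_truncNegBinomialPmf hr hξ0 hξ1) hle hjoint)
        l, tsum_congr hfiber,
      ← ENNReal.ofReal_tsum_of_nonneg (fun k => mul_nonneg hc.le (hf k)) (hfD.mul_left c).summable,
      (hfD.mul_left c).tsum_eq]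
  refine ⟨fun k => ?_, (hfD.div_const D).tsum_eq.trans (div_self hD.ne')⟩
  rw [setOf_sub_eq_and_eq hle, hfiber, hmarg, ENNReal.toReal_ofReal (mul_nonneg hc.le (hf k)),
    ENNReal.toReal_ofReal (mul_nonneg hc.le hD.le), mul_div_mul_left _ _ hc.ne']
  rfl
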